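/- Suppose S_max ⊆ Q is a subset with ρ(S_max) ≥ ρ_opt / N under weights w. Increase entry e₀ by δ > 0 to obtain weights w'. If for some slice q ∈ slices e₀, the cumulative maximum c_π(q) in a D-ordering π of w' satisfies c_π(q) < ρ_{w'}(S_max), then ρ_{w'}(S_max) ≥ ρ_opt(w')/N still holds. -/
import Mathlib


open Finset

variable {α β : Type*}

noncomputable def mass [DecidableEq α] (E : Finset β) (w : β → ℝ)
    (slices : β → Finset α) (S : Finset α) : ℝ :=
  ∑ e ∈ E.filter (fun e => slices e ⊆ S), w e

noncomputable def sliceSum [DecidableEq α] (E : Finset β) (w : β → ℝ)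
    (slices : β → Finset α) (S : Finset α) (q : α) : ℝ :=
  ∑ e ∈ E.filter (fun e => slices e ⊆ S ∧ q ∈ slices e), w e

noncomputable def density [DecidableEq α] (E : Finset β) (w : β → ℝ)
    (slices : β → Finset α) (S : Finset α) : ℝ :=
  mass E w slices S / S.card

def suffixSet [DecidableEq α] {m : ℕ} (π : Fin m → α) (j : Fin m) : Finset α :=
  (Finset.univ.filter (fun i => j ≤ i)).image π

def IsDOrdering [DecidableEq α] (E : Finset β) (w : β → ℝ)
    (slices : β → Finset α) {m : ℕ} (π : Fin m → α) : Prop :=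
  ∀ j : Fin m, ∀ r ∈ suffixSet π j,
    sliceSum E w slices (suffixSet π j) (π j) ≤ sliceSum E w slices (suffixSet π j) r

noncomputable def rhoOpt [DecidableEq α] [DecidableEq β] (Q : Finset α) (E : Finset β) (w : β → ℝ)
    (slices : β → Finset α) : ℝ :=
  sSup {x | ∃ S, S ⊆ Q ∧ S.Nonempty ∧ x = density E w slices S}

noncomputable def dpi [DecidableEq α] (E : Finset β) (w : β → ℝ)
    (slices : β → Finset α) {m : ℕ} (π : Fin m → α) (i : Fin m) : ℝ :=
  sliceSum E w slices (suffixSet π i) (π i)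

noncomputable def cpi [DecidableEq α] (E : Finset β) (w : β → ℝ)
    (slices : β → Finset α) {m : ℕ} (π : Fin m → α) (i : Fin m) : ℝ :=
  (Finset.univ.filter (fun i' : Fin m => i' ≤ i)).sup' ⟨i, by simp⟩ (dpi E w slices π)

section Aux
variable [DecidableEq α] [DecidableEq β] (Q : Finset α) (E : Finset β) (w : β → ℝ)
  (slices : β → Finset α)

lemma mass_nonneg (hw : ∀ e, 0 ≤ w e) (S : Finset α) : 0 ≤ mass E w slices S :=
  Finset.sum_nonneg fun e _ => hw e

lemma density_nonneg (hw : ∀ e, 0 ≤ w e) (S : Finset α) : 0 ≤ density E w slices S :=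
  div_nonneg (mass_nonneg E w slices hw S) (Nat.cast_nonneg _)

lemma rhoSet_eq :
    {x | ∃ S, S ⊆ Q ∧ S.Nonempty ∧ x = density E w slices S} =
      ↑(((Q.powerset.filter (fun S => S.Nonempty)).image (density E w slices))) := by
  ext x
  simp only [Set.mem_setOf_eq, Finset.coe_image, Set.mem_image, Finset.mem_coe,
    Finset.mem_filter, Finset.mem_powerset]
  constructor
  · rintro ⟨S, h1, h2, h3⟩; exact ⟨S, ⟨h1, h2⟩, h3.symm⟩
  · rintro ⟨S, ⟨h1, h2⟩, h3⟩; exact ⟨S, h1, h2, h3.symm⟩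

lemma rhoOpt_ge (hQ : Q.Nonempty) {S : Finset α} (hS : S ⊆ Q) (hSne : S.Nonempty) :
    density E w slices S ≤ rhoOpt Q E w slices := by
  apply le_csSup
  · rw [rhoSet_eq]
    exact Finset.bddAbove _
  · exact ⟨S, hS, hSne, rfl⟩

lemma rhoOpt_exists (hQ : Q.Nonempty) :
    ∃ S, S ⊆ Q ∧ S.Nonempty ∧ rhoOpt Q E w slices = density E w slices S := by
  have hmem : rhoOpt Q E w slices ∈
      {x | ∃ S, S ⊆ Q ∧ S.Nonempty ∧ x = density E w slices S} := by
    apply Set.Nonempty.csSup_mem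
    · exact ⟨density E w slices Q, Q, le_refl _, hQ, rfl⟩
    · rw [rhoSet_eq]; exact Finset.finite_toSet _
  exact hmem

lemma mass_mono_w (w' : β → ℝ) (hww' : ∀ e, w e ≤ w' e) (S : Finset α) :
    mass E w slices S ≤ mass E w' slices S :=
  Finset.sum_le_sum fun e _ => hww' e

lemma density_mono_w (w' : β → ℝ) (hww' : ∀ e, w e ≤ w' e) (S : Finset α) :
    density E w slices S ≤ density E w' slices S := by
  unfold density
  exact div_le_div_of_nonneg_right (mass_mono_w E w slices w' hww' S) (Nat.cast_nonneg _)

lemma sliceSum_mono (hw : ∀ e, 0 ≤ w e) {S T : Finset α} (hST : S ⊆ T) (r : α) :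
    sliceSum E w slices S r ≤ sliceSum E w slices T r := by
  apply Finset.sum_le_sum_of_subset_of_nonneg
  · intro e he
    simp only [Finset.mem_filter] at he ⊢
    exact ⟨he.1, he.2.1.trans hST, he.2.2⟩
  · intro e _ _; exact hw e

lemma mass_erase (S : Finset α) (r : α) :
    mass E w slices (S.erase r) = mass E w slices S - sliceSum E w slices S r := by
  unfold mass sliceSum
  rw [eq_sub_iff_add_eq]
  rw [← Finset.sum_union]
  · apply Finset.sum_congr _ (fun _ _ => rfl)
    ext e
    simp only [Finset.mem_union, Finset.mem_filter, Finset.subset_erase]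
    by_cases hr : r ∈ slices e <;> tauto
  · rw [Finset.disjoint_filter]
    rintro e _ h1 ⟨h3, h4⟩
    exact (Finset.notMem_erase r S) (h1 h4)

lemma sliceSum_ge_density {N : ℕ} (hN : 1 ≤ N) (hcard : ∀ e ∈ E, (slices e).card = N)
    (hw : ∀ e, 0 ≤ w e) (hQ : Q.Nonempty) {S : Finset α} (hSQ : S ⊆ Q) (hSne : S.Nonempty)
    (hmax : rhoOpt Q E w slices = density E w slices S) {r : α} (hr : r ∈ S) :
    density E w slices S ≤ sliceSum E w slices S r := by
  rcases eq_or_lt_of_le (Finset.one_le_card.mpr hSne) with h1 | h2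
  · -- card S = 1, so S = {r}
    obtain ⟨a, ha⟩ := Finset.card_eq_one.mp h1.symm
    subst ha
    rw [Finset.mem_singleton] at hr
    subst hr
    have : sliceSum E w slices {r} r = mass E w slices {r} := by
      unfold sliceSum mass
      apply Finset.sum_congr _ (fun _ _ => rfl)
      apply Finset.filter_congr
      intro e he
      simp only [and_iff_left_iff_imp]
      intro hsub
      have hne : (slices e).Nonempty := by
        rw [← Finset.card_pos, hcard e he]; omega
      obtain ⟨x, hx⟩ := hne
      have := hsub hx
      rw [Finset.mem_singleton] at this
      rwa [← this]
    rw [this]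
    unfold density
    simp
  · -- card S ≥ 2
    have hT : (S.erase r).Nonempty := by
      rw [← Finset.card_pos, Finset.card_erase_of_mem hr]; omega
    have hTQ : S.erase r ⊆ Q := (Finset.erase_subset _ _).trans hSQ
    have hle : density E w slices (S.erase r) ≤ density E w slices S := by
      rw [← hmax]; exact rhoOpt_ge Q E w slices hQ hTQ hT
    unfold density at hle ⊢
    rw [mass_erase, Finset.card_erase_of_mem hr] at hle
    set M := mass E w slices S with hM
    set d := sliceSum E w slices S r with hd
    have hs2' : (2 : ℕ) ≤ S.card := h2
    have hs2 : (2 : ℝ) ≤ (S.card : ℝ) := by exact_mod_cast hs2'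
    set s := (S.card : ℝ) with hs
    have hcast : ((S.card - 1 : ℕ) : ℝ) = s - 1 := by
      push_cast [Nat.cast_sub (by omega : 1 ≤ S.card)]; ring
    rw [hcast] at hle
    rw [div_le_div_iff₀ (by linarith) (by linarith)] at hle
    rw [div_le_iff₀ (by linarith)]
    nlinarith

end Aux

theorem conditional_update_preserves [DecidableEq α] [DecidableEq β] (Q : Finset α) (E : Finset β)
    (w : β → ℝ) (slices : β → Finset α) (N : ℕ) (hN : 1 ≤ N)
    (hcard : ∀ e ∈ E, (slices e).card = N) (hQ : Q.Nonempty)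
    (hw : ∀ e, 0 ≤ w e)
    (Smax : Finset α) (hsub : Smax ⊆ Q) (hne : Smax.Nonempty)
    (hguar : rhoOpt Q E w slices / N ≤ density E w slices Smax)
    (e₀ : β) (he₀ : e₀ ∈ E) (δ : ℝ) (hδ : 0 < δ)
    {m : ℕ} (hm : m = Q.card) (π : Fin m → α)
    (hinj : Function.Injective π) (himg : Finset.univ.image π = Q)
    (hD : IsDOrdering E (Function.update w e₀ (w e₀ + δ)) slices π)
    (q : α) (hq : q ∈ slices e₀) (i : Fin m) (hπ : π i = q)
    (hcond : cpi E (Function.update w e₀ (w e₀ + δ)) slices π i <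
      density E (Function.update w e₀ (w e₀ + δ)) slices Smax) :
    rhoOpt Q E (Function.update w e₀ (w e₀ + δ)) slices / N ≤
      density E (Function.update w e₀ (w e₀ + δ)) slices Smax := by
  set w' := Function.update w e₀ (w e₀ + δ) with hw'def
  have hw' : ∀ e, 0 ≤ w' e := by
    intro e
    rcases eq_or_ne e e₀ with h | h
    · subst h; rw [hw'def, Function.update_self]; linarith [hw e]
    · rw [hw'def, Function.update_of_ne h]; exact hw e
  have hwle : ∀ e, w e ≤ w' e := by
    intro e
    rcases eq_or_ne e e₀ with h | h
    · subst h; rw [hw'def, Function.update_self]; linarith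
    · rw [hw'def, Function.update_of_ne h]
  have hNpos : (0 : ℝ) < N := by exact_mod_cast Nat.lt_of_lt_of_le Nat.zero_lt_one hN
  have hN1 : (1 : ℝ) ≤ N := by exact_mod_cast hN
  obtain ⟨S, hSQ, hSne, hSmax⟩ := rhoOpt_exists Q E w' slices hQ
  have hDmaxnn : 0 ≤ density E w' slices Smax := density_nonneg E w' slices hw' Smax
  have key : density E w' slices S ≤ N * density E w' slices Smax := by
    by_cases hsl : slices e₀ ⊆ S
    · -- q ∈ S case
      have hqS : q ∈ S := hsl hq
      have hiT : i ∈ Finset.univ.filter (fun k : Fin m => π k ∈ S) := by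
        simp [hπ, hqS]
      set T := Finset.univ.filter (fun k : Fin m => π k ∈ S) with hT
      have hTne : T.Nonempty := ⟨i, hiT⟩
      set j := T.min' hTne with hj
      have hjT : j ∈ T := T.min'_mem hTne
      have hji : j ≤ i := T.min'_le i hiT
      have hπjS : π j ∈ S := by
        have := hjT; rw [hT, Finset.mem_filter] at this; exact this.2
      have hSsuf : S ⊆ suffixSet π j := by
        intro s hs
        have hsQ : s ∈ Q := hSQ hs
        rw [← himg, Finset.mem_image] at hsQ
        obtain ⟨k, _, hk⟩ := hsQ
        have hkT : k ∈ T := by rw [hT, Finset.mem_filter]; exact ⟨Finset.mem_univ _, hk ▸ hs⟩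
        have : j ≤ k := T.min'_le k hkT
        rw [suffixSet, Finset.mem_image]
        exact ⟨k, by simp [this], hk⟩
      have d1 : density E w' slices S ≤ sliceSum E w' slices S (π j) :=
        sliceSum_ge_density Q E w' slices hN hcard hw' hQ hSQ hSne hSmax hπjS
      have d2 : sliceSum E w' slices S (π j) ≤ dpi E w' slices π j :=
        sliceSum_mono E w' slices hw' hSsuf (π j)
      have d3 : dpi E w' slices π j ≤ cpi E w' slices π i := by
        apply Finset.le_sup'
        simp [hji]
      have : density E w' slices S ≤ density E w' slices Smax :=
        le_of_lt (lt_of_le_of_lt (d1.trans (d2.trans d3)) hcond)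
      nlinarith [hDmaxnn, hN1]
    · -- slices e₀ ⊄ S
      have hmass : mass E w' slices S = mass E w slices S := by
        apply Finset.sum_congr rfl
        intro e he
        rw [Finset.mem_filter] at he
        have hne₀ : e ≠ e₀ := by rintro rfl; exact hsl he.2
        rw [hw'def, Function.update_of_ne hne₀]
      have hdens : density E w' slices S = density E w slices S := by
        unfold density; rw [hmass]
      have h1 : density E w slices S ≤ rhoOpt Q E w slices :=
        rhoOpt_ge Q E w slices hQ hSQ hSne
      have h2 : rhoOpt Q E w slices ≤ N * density E w slices Smax := by
        rw [div_le_iff₀ hNpos] at hguar; linarith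
      have h3 : density E w slices Smax ≤ density E w' slices Smax :=
        density_mono_w E w slices w' hwle Smax
      rw [hdens]
      nlinarith [hNpos.le]
  rw [hSmax, div_le_iff₀ hNpos]
  linarith
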